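/- arXiv:1312.0216 — 10 statements merged into one kernel-verified Lean document; each statement's English description precedes it below -/
import Mathlib

section
/- For every positive integer n, all roots of the polynomial P_n lie in the closed unit disk D_1, i.e., every z ∈ ℂ with P_n(z) = 0 satisfies |z| ≤ 1. -/
/-!
The coefficients `nᵏ / k!` of `P n` increase for `k ≤ n`, so the claim is an instance of the
Eneström–Kakeya theorem. For `0 ≤ a₀ ≤ ⋯ ≤ aₙ` with `aₙ > 0`, multiplying `∑ aₖ zᵏ = 0` by `1 - z`
gives `aₙ zⁿ⁺¹ = a₀ + ∑ (aₖ₊₁ - aₖ) zᵏ⁺¹`. The differences are nonnegative and telescope to `aₙ`,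
so if `|z| > 1` the right side has modulus at most `aₙ |z|ⁿ < aₙ |z|ⁿ⁺¹`.
-/

/-- The scaled `n`-th partial sum of the exponential function:
`P n z = ∑_{k=0}^n (n z)^k / k!`. -/
noncomputable def P (n : ℕ) (z : ℂ) : ℂ :=
  ∑ k ∈ Finset.range (n + 1), ((n : ℂ) * z) ^ k / (Nat.factorial k)

open Finset Nat

theorem one_sub_mul_sum_range_mul_pow {R : Type*} [CommRing R] (a : ℕ → R) (z : R) (n : ℕ) :
    (1 - z) * ∑ k ∈ range (n + 1), a k * z ^ k =
      a 0 + ∑ k ∈ range n, (a (k + 1) - a k) * z ^ (k + 1) - a n * z ^ (n + 1) := by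
  induction n with
  | zero => simp; ring
  | succ n ih => rw [sum_range_succ, mul_add, ih, sum_range_succ]; ring

theorem norm_le_one_of_sum_mul_pow_eq_zero {a : ℕ → ℝ} {n : ℕ} (h0 : 0 ≤ a 0)
    (hmono : ∀ k < n, a k ≤ a (k + 1)) (hn : 0 < a n) {z : ℂ}
    (hz : ∑ k ∈ range (n + 1), (a k : ℂ) * z ^ k = 0) : ‖z‖ ≤ 1 := by
  by_contra! hr
  have key : (a n : ℂ) * z ^ (n + 1) =
      (a 0 : ℂ) + ∑ k ∈ range n, ((a (k + 1) - a k : ℝ) : ℂ) * z ^ (k + 1) := by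
    push_cast
    linear_combination one_sub_mul_sum_range_mul_pow (fun k ↦ (a k : ℂ)) z n - (1 - z) * hz
  have hle : a n * ‖z‖ ^ (n + 1) ≤ a n * ‖z‖ ^ n :=
    calc a n * ‖z‖ ^ (n + 1) = ‖(a n : ℂ) * z ^ (n + 1)‖ := by
          rw [norm_mul, norm_pow, Complex.norm_real, Real.norm_of_nonneg hn.le]
      _ ≤ ‖(a 0 : ℂ)‖ + ∑ k ∈ range n, ‖((a (k + 1) - a k : ℝ) : ℂ) * z ^ (k + 1)‖ := by
          rw [key]; exact (norm_add_le _ _).trans (by gcongr; exact norm_sum_le _ _)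
      _ = a 0 + ∑ k ∈ range n, (a (k + 1) - a k) * ‖z‖ ^ (k + 1) := by
          refine congrArg₂ _ (by simp [h0]) (sum_congr rfl fun k hk ↦ ?_)
          rw [norm_mul, norm_pow, Complex.norm_real,
            Real.norm_of_nonneg (sub_nonneg.2 (hmono k (mem_range.1 hk)))]
      _ ≤ a 0 * ‖z‖ ^ n + ∑ k ∈ range n, (a (k + 1) - a k) * ‖z‖ ^ n := by
          refine add_le_add (le_mul_of_one_le_right h0 (one_le_pow₀ hr.le))
            (sum_le_sum fun k hk ↦ mul_le_mul_of_nonneg_left ?_ ?_)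
          · exact pow_le_pow_right₀ hr.le (mem_range.1 hk)
          · exact sub_nonneg.2 (hmono k (mem_range.1 hk))
      _ = a n * ‖z‖ ^ n := by rw [← sum_mul, sum_range_sub]; ring
  rw [pow_succ, ← mul_assoc] at hle
  exact hr.not_ge <| le_of_mul_le_mul_left (a := a n * ‖z‖ ^ n) (by rwa [mul_one])
    (mul_pos hn (pow_pos (one_pos.trans hr) n))

theorem pow_div_factorial_le_pow_succ_div_factorial_succ {x : ℝ} {k : ℕ} (hx : k + 1 ≤ x) :
    x ^ k / k ! ≤ x ^ (k + 1) / (k + 1)! := by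
  have hx0 : 0 < x := lt_of_lt_of_le (by positivity) hx
  rw [show x ^ (k + 1) / (k + 1)! = x ^ k / k ! * (x / (k + 1)) by
    rw [Nat.factorial_succ]; push_cast; field_simp; ring]
  exact le_mul_of_one_le_right (by positivity) ((one_le_div (by positivity)).2 hx)

theorem P_eq_sum_ofReal_mul_pow (n : ℕ) (z : ℂ) :
    P n z = ∑ k ∈ range (n + 1), (((n : ℝ) ^ k / k ! : ℝ) : ℂ) * z ^ k := by
  unfold P
  refine sum_congr rfl fun k _ ↦ ?_
  push_cast
  ring

theorem roots_of_Pn_in_unit_disk_general (n : ℕ) (z : ℂ) (hz : P n z = 0) :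
    ‖z‖ ≤ 1 := by
  rw [P_eq_sum_ofReal_mul_pow] at hz
  refine norm_le_one_of_sum_mul_pow_eq_zero (by positivity) (fun k hk ↦ ?_) ?_ hz
  · exact pow_div_factorial_le_pow_succ_div_factorial_succ (by exact_mod_cast hk)
  · exact div_pos (mod_cast Nat.pow_self_pos) (by positivity)

/-- For every positive integer `n`, all roots of `P n` lie in the closed unit disk. -/
theorem roots_of_Pn_in_unit_disk (n : ℕ) (hn : 0 < n) (z : ℂ) (hz : P n z = 0) :
    ‖z‖ ≤ 1 :=
  roots_of_Pn_in_unit_disk_general n z hz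
end

section
/- For each ε ∈ (0,1) and each positive integer n with n ≥ (1.0085·e/ε)², the scaled stability region S_n is contained in the closed disk D_{1+ε}, i.e., every z ∈ ℂ with |P_n(z)| ≤ 1 satisfies |z| ≤ 1 + ε. -/
/-!
Multiplying a truncated exponential series by `z - 1` telescopes its coefficients:
`n (z - 1) P_n(z) = (n^{n+1}/n!) z^{n+1} - ∑_{k ≤ n} (n - k) (n^k/k!) z^k`.
Since `n^k/k! ≤ n^n/n!` for `k ≤ n` and `∑_{k ≤ n} (n - k) r^k ≤ r^{n+1}/(r - 1)^2`, the leading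
term dominates as soon as `n (|z| - 1)^2 ≥ 4`, which forces `|P_n(z)| > 1`. Hence
`S_n ⊆ D_{1 + 2/√n}`, which suffices because `(1.0085 e)^2 > 4`.
-/

open Finset
open scoped Nat

theorem mul_sub_one_mul_sum_pow_div_factorial {K : Type*} [Field K] [CharZero K]
    (x z : K) (m : ℕ) :
    x * ((z - 1) * ∑ k ∈ range (m + 1), (x * z) ^ k / k !) =
      x ^ (m + 1) / m ! * z ^ (m + 1) - ∑ k ∈ range (m + 1), (x - k) * x ^ k / k ! * z ^ k := by
  induction m with
  | zero => simp [mul_sub]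
  | succ m ih =>
    rw [sum_range_succ, mul_add, mul_add, ih, sum_range_succ _ (m + 1), Nat.factorial_succ]
    push_cast
    field_simp
    ring

theorem sq_sub_one_mul_sum_sub_mul_pow {R : Type*} [CommRing R] (r : R) (n : ℕ) :
    (r - 1) ^ 2 * ∑ k ∈ range (n + 1), ((n : R) - k) * r ^ k = r ^ (n + 1) - (n + 1) * r + n := by
  induction n with
  | zero => simp
  | succ n ih =>
    have hshift : ∑ k ∈ range (n + 1 + 1), ((↑(n + 1) : R) - k) * r ^ k =
        r * ∑ k ∈ range (n + 1), ((n : R) - k) * r ^ k + (n + 1) := by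
      rw [sum_range_succ', mul_sum]
      push_cast
      congr 1
      · exact sum_congr rfl fun k _ => by ring
      · ring
    rw [hshift, mul_add, mul_left_comm, ih]
    push_cast
    ring

theorem sq_sub_one_mul_sum_sub_mul_pow_le {r : ℝ} (hr : 1 ≤ r) (n : ℕ) :
    (r - 1) ^ 2 * ∑ k ∈ range (n + 1), ((n : ℝ) - k) * r ^ k ≤ r ^ (n + 1) := by
  rw [sq_sub_one_mul_sum_sub_mul_pow]
  nlinarith [(n.cast_nonneg : (0 : ℝ) ≤ n)]

theorem pow_div_factorial_le_pow_div_factorial {x : ℝ} {k n : ℕ} (hkn : k ≤ n) (hnx : (n : ℝ) ≤ x) :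
    x ^ k / k ! ≤ x ^ n / n ! := by
  induction n, hkn using Nat.le_induction with
  | base => rfl
  | succ n _ ih =>
    have hn1 : (n : ℝ) + 1 ≤ x := by exact_mod_cast hnx
    calc x ^ k / k ! ≤ x ^ n / n ! := ih (by linarith)
      _ ≤ x ^ n / n ! * (x / (n + 1)) := by
        have hx : 0 ≤ x := by linarith [(n.cast_nonneg : (0 : ℝ) ≤ n)]
        apply le_mul_of_one_le_right (by positivity)
        rw [one_le_div (by positivity)]
        exact hn1
      _ = x ^ (n + 1) / (n + 1)! := by
        rw [Nat.factorial_succ]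
        push_cast
        field_simp
        ring

theorem norm_sum_sub_mul_pow_div_factorial_le (n : ℕ) (z : ℂ) :
    ‖∑ k ∈ range (n + 1), ((n : ℂ) - k) * (n : ℂ) ^ k / k ! * z ^ k‖ ≤
      (n : ℝ) ^ n / n ! * ∑ k ∈ range (n + 1), ((n : ℝ) - k) * ‖z‖ ^ k := by
  rw [mul_sum]
  refine (norm_sum_le _ _).trans (sum_le_sum fun k hk => ?_)
  have hkn : k ≤ n := Nat.lt_succ_iff.mp (mem_range.mp hk)
  have hnk : (0 : ℝ) ≤ n - k := sub_nonneg.mpr (by exact_mod_cast hkn)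
  have hcast : ((n : ℂ) - k) * (n : ℂ) ^ k / k ! = (((n - k) * (n : ℝ) ^ k / k ! : ℝ) : ℂ) := by
    push_cast; rfl
  rw [hcast, norm_mul, Complex.norm_real, norm_pow, Real.norm_of_nonneg (by positivity)]
  calc (n - k) * (n : ℝ) ^ k / k ! * ‖z‖ ^ k = (n : ℝ) ^ k / k ! * ((n - k) * ‖z‖ ^ k) := by ring
    _ ≤ (n : ℝ) ^ n / n ! * ((n - k) * ‖z‖ ^ k) :=
      mul_le_mul_of_nonneg_right (pow_div_factorial_le_pow_div_factorial hkn le_rfl) (by positivity)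

theorem pow_div_factorial_mul_le_norm_sub_one_mul_norm_P (n : ℕ) {z : ℂ} (hz : 1 ≤ ‖z‖) :
    (n : ℝ) ^ n / n ! * ‖z‖ ^ (n + 1) * (n * (‖z‖ - 1) ^ 2 - 1) ≤
      n * (‖z‖ - 1) ^ 2 * (‖z - 1‖ * ‖P n z‖) := by
  set r := ‖z‖
  set T := (n : ℝ) ^ n / (n ! : ℝ)
  set S := ∑ k ∈ range (n + 1), ((n : ℝ) - k) * r ^ k
  have hlead : ‖(n : ℂ) ^ (n + 1) / n ! * z ^ (n + 1)‖ = n * T * r ^ (n + 1) := by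
    simp only [T, r, norm_mul, norm_div, norm_pow, Complex.norm_natCast]
    ring
  have hP : n * T * r ^ (n + 1) - T * S ≤ n * (‖z - 1‖ * ‖P n z‖) := by
    have hid := congrArg norm (mul_sub_one_mul_sum_pow_div_factorial (n : ℂ) z n)
    rw [norm_mul, norm_mul, Complex.norm_natCast] at hid
    rw [P, hid, ← hlead]
    exact (norm_sub_norm_le _ _).trans' (by gcongr; exact norm_sum_sub_mul_pow_div_factorial_le n z)
  have hT : 0 ≤ T := by positivity
  calc T * r ^ (n + 1) * (n * (r - 1) ^ 2 - 1)
      ≤ T * (n * (r - 1) ^ 2 * r ^ (n + 1) - (r - 1) ^ 2 * S) := by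
        nlinarith [sq_sub_one_mul_sum_sub_mul_pow_le hz n]
    _ = (r - 1) ^ 2 * (n * T * r ^ (n + 1) - T * S) := by ring
    _ ≤ (r - 1) ^ 2 * (n * (‖z - 1‖ * ‖P n z‖)) := by gcongr
    _ = n * (r - 1) ^ 2 * (‖z - 1‖ * ‖P n z‖) := by ring

theorem one_lt_norm_P {n : ℕ} {z : ℂ} (hz : 1 < ‖z‖) (hn : 4 ≤ n * (‖z‖ - 1) ^ 2) :
    1 < ‖P n z‖ := by
  have hlow := pow_div_factorial_mul_le_norm_sub_one_mul_norm_P n hz.le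
  set r := ‖z‖
  have hn1 : (1 : ℝ) ≤ n := by
    rcases n.eq_zero_or_pos with rfl | h
    · norm_num at hn
    · exact_mod_cast h
  have hT : 1 ≤ (n : ℝ) ^ n / n ! := by
    rw [one_le_div (by positivity)]
    exact_mod_cast n.factorial_le_pow
  have hbernoulli : r * (1 + n * (r - 1)) ≤ r ^ (n + 1) := by
    have h := one_add_mul_le_pow (show -2 ≤ r - 1 by linarith) n
    rw [add_sub_cancel] at h
    rw [pow_succ']
    exact mul_le_mul_of_nonneg_left h (by linarith)
  have hns : 2 ≤ n * (r - 1) := by nlinarith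
  have hz1 : ‖z - 1‖ ≤ r + 1 := (norm_sub_le z 1).trans_eq (by rw [norm_one])
  by_contra! hP
  have hup : n * (r - 1) ^ 2 * (‖z - 1‖ * ‖P n z‖) ≤ n * (r - 1) ^ 2 * (r + 1) := by
    gcongr
    exact mul_le_of_le_one_right (norm_nonneg _) hP |>.trans hz1
  have h3r : 3 * r ≤ (n : ℝ) ^ n / n ! * r ^ (n + 1) :=
    calc 3 * r ≤ r * (1 + n * (r - 1)) := by nlinarith
      _ ≤ r ^ (n + 1) := hbernoulli
      _ ≤ (n : ℝ) ^ n / n ! * r ^ (n + 1) := le_mul_of_one_le_left (by positivity) hT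
  nlinarith [mul_le_mul_of_nonneg_right h3r (by linarith : (0 : ℝ) ≤ n * (r - 1) ^ 2 - 1)]

theorem Sn_subset_D_one_add_eps_general (ε : ℝ) (hε0 : 0 < ε)
    (n : ℕ) (hn0 : (1.0085 * Real.exp 1 / ε) ^ 2 ≤ (n : ℝ))
    (z : ℂ) (hz : ‖P n z‖ ≤ 1) :
    ‖z‖ ≤ 1 + ε := by
  by_contra! hz_out
  have hc : 2 ≤ 1.0085 * Real.exp 1 := by linarith [Real.add_one_le_exp (1 : ℝ)]
  have hnε : 4 ≤ n * ε ^ 2 :=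
    calc (4 : ℝ) ≤ (1.0085 * Real.exp 1 / ε) ^ 2 * ε ^ 2 := by
          rw [div_pow, div_mul_cancel₀ _ (by positivity)]; nlinarith
      _ ≤ n * ε ^ 2 := by gcongr
  have hn : 4 ≤ n * (‖z‖ - 1) ^ 2 := hnε.trans (by gcongr; linarith)
  exact (one_lt_norm_P (by linarith) hn).not_ge hz

/-- For each `ε ∈ (0,1)` and each positive integer `n ≥ (1.0085 e / ε)²`,
the scaled stability region `S_n` is contained in the closed disk of radius `1 + ε`. -/
theorem Sn_subset_D_one_add_eps (ε : ℝ) (hε0 : 0 < ε) (hε1 : ε < 1)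
    (n : ℕ) (hn : 0 < n) (hn0 : (1.0085 * Real.exp 1 / ε) ^ 2 ≤ (n : ℝ))
    (z : ℂ) (hz : ‖P n z‖ ≤ 1) :
    ‖z‖ ≤ 1 + ε :=
  Sn_subset_D_one_add_eps_general ε hε0 n hn0 z hz
end

section
/- For every integer n ≥ 2, the scaled stability region S_n is contained in the closed disk D_{1.6}, i.e., every z ∈ ℂ with |P_n(z)| ≤ 1 satisfies |z| ≤ 1.6. -/
open Finset Nat

section ExpPartialSum

variable {K : Type*} [Field K] [CharZero K]

theorem natCast_succ_mul_pow_succ_div_factorial (w : K) (k : ℕ) :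
    ((k + 1 : ℕ) : K) * (w ^ (k + 1) / (k + 1)!) = w * (w ^ k / k !) := by
  rw [Nat.factorial_succ]; push_cast; field_simp; ring

theorem sub_natCast_mul_sum_range_pow_div_factorial (n : ℕ) (w : K) :
    (w - n) * ∑ k ∈ range (n + 1), w ^ k / k ! =
      w * (w ^ n / n !) - ∑ k ∈ range (n + 1), ((n : K) - k) * (w ^ k / k !) := by
  have telescope := sum_range_sub (fun k => (k : K) * (w ^ k / k !)) (n + 1)
  simp only [natCast_succ_mul_pow_succ_div_factorial, CharP.cast_eq_zero, zero_mul,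
    sub_zero] at telescope
  rw [← telescope, mul_sum, ← sum_sub_distrib]
  refine sum_congr rfl fun k _ => ?_
  ring

end ExpPartialSum

theorem sum_range_natCast_sub_mul_pow_div_factorial (n : ℕ) :
    ∑ k ∈ range (n + 1), ((n : ℝ) - k) * ((n : ℝ) ^ k / k !) = n * (n ^ n / n !) := by
  have h := sub_natCast_mul_sum_range_pow_div_factorial n (n : ℝ)
  rw [sub_self, zero_mul] at h
  linarith

theorem two_mul_pow_le_succ_pow {n : ℕ} (hn : n ≠ 0) : 2 * (n : ℝ) ^ n ≤ (n + 1) ^ n := by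
  have hn' : (0 : ℝ) < n := by positivity
  have bernoulli := one_add_mul_le_pow (a := 1 / (n : ℝ)) (by linarith [one_div_pos.2 hn']) n
  rw [mul_one_div_cancel hn'.ne', one_add_one_eq_two] at bernoulli
  calc 2 * (n : ℝ) ^ n ≤ (1 + 1 / n) ^ n * n ^ n := by gcongr
    _ = (n + 1) ^ n := by rw [← mul_pow]; congr 1; field_simp

theorem five_mul_factorial_le {n : ℕ} (hn : 2 ≤ n) : 5 * (n ! : ℝ) ≤ (8 / 5 * n) ^ n := by
  induction n, hn using Nat.le_induction with
  | base => norm_num [Nat.factorial]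
  | succ n hn ih =>
    have hsucc := two_mul_pow_le_succ_pow (n := n) (by omega)
    have hpow : (0 : ℝ) ≤ (8 / 5) ^ n * (n + 1) ^ (n + 1) := by positivity
    calc 5 * ((n + 1)! : ℝ) = (n + 1) * (5 * n !) := by push_cast [Nat.factorial_succ]; ring
      _ ≤ (n + 1) * ((8 / 5) ^ n * n ^ n) := by rw [← mul_pow]; gcongr
      _ ≤ (n + 1) * ((8 / 5) ^ n * ((n + 1) ^ n / 2)) := by gcongr; linarith
      _ = (8 / 5) ^ n * (n + 1) ^ (n + 1) / 2 := by ring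
      _ ≤ (8 / 5 * ↑(n + 1)) ^ (n + 1) := by
          push_cast; rw [mul_pow, pow_succ (8 / 5 : ℝ)]; linarith

theorem norm_natCast_mul_pow_div_factorial (n k : ℕ) (z : ℂ) :
    ‖((n : ℂ) * z) ^ k / (k !)‖ = (n * ‖z‖) ^ k / k ! := by
  simp only [norm_div, norm_pow, norm_mul, Complex.norm_natCast]

theorem norm_mul_norm_sum_natCast_sub_mul_le {n : ℕ} {z : ℂ} (hz : 1 ≤ ‖z‖) :
    ‖z‖ * ‖∑ k ∈ range (n + 1), ((n : ℂ) - k) * ((n * z) ^ k / k !)‖ ≤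
      n * ‖((n : ℂ) * z) ^ n / (n !)‖ := by
  set r := ‖z‖
  have term : ∀ k ∈ range (n + 1),
      r * ‖((n : ℂ) - k) * ((n * z) ^ k / k !)‖ ≤ r ^ n * ((n - k) * (n ^ k / k !)) := by
    intro k hk
    have hkn : k ≤ n := Nat.lt_succ_iff.mp (mem_range.mp hk)
    have hcoeff : ‖(n : ℂ) - k‖ = n - k := by
      rw [← Nat.cast_sub hkn, Complex.norm_natCast, Nat.cast_sub hkn]
    have hpow : ((n : ℝ) - k) * r ^ (k + 1) ≤ (n - k) * r ^ n := by
      rcases hkn.eq_or_lt with rfl | hlt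
      · simp
      · gcongr
        · linarith [(Nat.cast_lt (α := ℝ)).2 hlt]
        · exact hlt
    rw [norm_mul, hcoeff, norm_natCast_mul_pow_div_factorial]
    calc r * ((n - k) * ((n * r) ^ k / k !)) = ((n - k) * r ^ (k + 1)) * (n ^ k / k !) := by
          ring
      _ ≤ ((n - k) * r ^ n) * (n ^ k / k !) := by gcongr
      _ = r ^ n * ((n - k) * (n ^ k / k !)) := by ring
  calc r * ‖∑ k ∈ range (n + 1), ((n : ℂ) - k) * ((n * z) ^ k / k !)‖
      ≤ ∑ k ∈ range (n + 1), r * ‖((n : ℂ) - k) * ((n * z) ^ k / k !)‖ := by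
        rw [← mul_sum]; gcongr; exact norm_sum_le _ _
    _ ≤ ∑ k ∈ range (n + 1), r ^ n * ((n - k) * (n ^ k / k !)) := sum_le_sum term
    _ = n * ‖((n : ℂ) * z) ^ n / (n !)‖ := by
        rw [← mul_sum, sum_range_natCast_sub_mul_pow_div_factorial,
          norm_natCast_mul_pow_div_factorial]
        ring

theorem natCast_mul_sub_one_mul_P (n : ℕ) (z : ℂ) :
    n * (z - 1) * P n z =
      n * z * ((n * z) ^ n / n !) -
        ∑ k ∈ range (n + 1), ((n : ℂ) - k) * ((n * z) ^ k / k !) := by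
  rw [P, ← sub_natCast_mul_sum_range_pow_div_factorial]
  ring

theorem sub_one_mul_norm_pow_div_factorial_le_of_norm_P_le_one {n : ℕ} (hn : 0 < n) {z : ℂ}
    (hz : 1 ≤ ‖z‖) (hP : ‖P n z‖ ≤ 1) :
    (‖z‖ - 1) * ‖((n : ℂ) * z) ^ n / (n !)‖ ≤ ‖z‖ := by
  set r := ‖z‖
  set T := ‖((n : ℂ) * z) ^ n / (n !)‖
  set S := ‖∑ k ∈ range (n + 1), ((n : ℂ) - k) * ((n * z) ^ k / k !)‖
  have hS : r * S ≤ n * T := norm_mul_norm_sum_natCast_sub_mul_le hz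
  have hupper : n * r * T - S ≤ n * (r + 1) :=
    calc n * r * T - S = ‖n * z * ((n * z) ^ n / n !)‖ - S := by
          rw [norm_mul, norm_mul, Complex.norm_natCast]
      _ ≤ ‖(n : ℂ) * (z - 1) * P n z‖ := by
          rw [natCast_mul_sub_one_mul_P]; exact norm_sub_norm_le _ _
      _ = n * ‖z - 1‖ * ‖P n z‖ := by rw [norm_mul, norm_mul, Complex.norm_natCast]
      _ ≤ n * (r + 1) * 1 := by
          gcongr
          exact (norm_sub_le z 1).trans_eq (by rw [norm_one])
      _ = n * (r + 1) := mul_one _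
  have hn' : (0 : ℝ) < n * (r + 1) := by positivity
  have key : n * (r + 1) * ((r - 1) * T) ≤ n * (r + 1) * r := by nlinarith
  exact le_of_mul_le_mul_left key hn'

theorem five_le_norm_pow_div_factorial {n : ℕ} (hn : 2 ≤ n) {z : ℂ} (hz : 8 / 5 ≤ ‖z‖) :
    5 ≤ ‖((n : ℂ) * z) ^ n / (n !)‖ := by
  rw [norm_natCast_mul_pow_div_factorial, le_div_iff₀ (by positivity)]
  calc 5 * (n ! : ℝ) ≤ (8 / 5 * n) ^ n := five_mul_factorial_le hn
    _ ≤ (n * ‖z‖) ^ n := by rw [mul_comm]; gcongr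

/-- For every integer `n ≥ 2`, the scaled stability region `S_n` is contained in
the closed disk of radius `1.6`. -/
theorem Sn_subset_D_1_6 (n : ℕ) (hn : 2 ≤ n) (z : ℂ) (hz : ‖P n z‖ ≤ 1) :
    ‖z‖ ≤ 1.6 := by
  by_contra! hlarge
  have hr : 8 / 5 ≤ ‖z‖ := by norm_num at hlarge ⊢; linarith
  have hT := five_le_norm_pow_div_factorial hn hr
  have hbound :=
    sub_one_mul_norm_pow_div_factorial_le_of_norm_P_le_one (by omega) (by linarith) hz
  nlinarith
end

section
/- For every real y and every positive integer n, the following explicit formulas hold: E_n(y) = −(y^{n+1}/n!) ∑_{k=1}^{n/2} (−1)^{k+1} y^{2k−1} / ((2k−1)!·(k+n/2)) if n ≡ 0 (mod 4); E_n(y) = (y^{n+1}/n!) ∑_{k=0}^{(n−1)/2} (−1)^k y^{2k} / ((2k)!·(k+(n+1)/2)) if n ≡ 1 (mod 4); E_n(y) = (y^{n+1}/n!) ∑_{k=1}^{n/2} (−1)^{k+1} y^{2k−1} / ((2k−1)!·(k+n/2)) if n ≡ 2 (mod 4); and E_n(y) = −(y^{n+1}/n!) ∑_{k=0}^{(n−1)/2}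 (−1)^k y^{2k} / ((2k)!·(k+(n+1)/2)) if n ≡ 3 (mod 4). -/
/-!
Let `e_n = ∑_{k ≤ n} X^k / k!`. For real `y`, `|e_n(iy)|² = e_n(iy) e_n(-iy)`, so `E n y` is
read off the polynomial `F = e_n(X) e_n(-X)`. Since `e_n' = e_n - X^n / n!`, the derivative of `F`
is `(X^n / n!) ((-1)^n e_n(X) - e_n(-X))`; together with `F(0) = 1` this gives
`F = 1 + ∑_{j ≤ n} ((-1)^n - (-1)^j) / (n! j! (n + j + 1)) X^(n + j + 1)`.
Only the indices `j` of parity opposite to `n` survive, and for them `(iy)^(n + j + 1)` is real;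
the sign of the result depends on the parity of `n / 2`, resp. `(n + 1) / 2`.
-/

/-- The `E`-polynomial: `E n y = |∑_{k=0}^n (i y)^k / k!|² - 1`. -/
noncomputable def E (n : ℕ) (y : ℝ) : ℝ :=
  ‖∑ k ∈ Finset.range (n + 1), (Complex.I * (y : ℂ)) ^ k / (Nat.factorial k)‖ ^ 2 - 1

open Finset Polynomial Nat ComplexConjugate

theorem Polynomial.eq_of_derivative_eq_of_coeff_zero_eq {R : Type*} [Ring R] [IsDomain R]
    [CharZero R] {p q : R[X]} (hd : derivative p = derivative q) (h0 : p.coeff 0 = q.coeff 0) :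
    p = q := by
  ext (_ | m)
  · exact h0
  · have := congr_arg (coeff · m) hd
    simp only [coeff_derivative] at this
    exact mul_right_cancel₀ (Nat.cast_add_one_ne_zero m) this

theorem Finset.sum_range_two_mul {M : Type*} [AddCommMonoid M] (f : ℕ → M) (m : ℕ) :
    ∑ j ∈ range (2 * m), f j = ∑ i ∈ range m, (f (2 * i) + f (2 * i + 1)) := by
  induction m with
  | zero => simp
  | succ m ih => rw [Nat.mul_succ, sum_range_succ, sum_range_succ, sum_range_succ, ih, add_assoc]

noncomputable def expPoly (K : Type*) [Field K] (n : ℕ) : K[X] :=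
  ∑ k ∈ range (n + 1), C (k ! : K)⁻¹ * X ^ k

section expPoly

variable {K : Type*} [Field K]

theorem derivative_expPoly [CharZero K] (n : ℕ) :
    derivative (expPoly K n) = expPoly K n - C (n ! : K)⁻¹ * X ^ n := by
  rw [expPoly, derivative_sum, sum_range_succ', sum_range_succ, add_sub_cancel_right]
  refine (add_eq_left.2 (by simp)).trans (sum_congr rfl fun k _ => ?_)
  rw [derivative_C_mul_X_pow, factorial_succ, add_tsub_cancel_right]
  congr 2
  push_cast
  field_simp

theorem neg_one_pow_mul_expPoly_sub_comp_neg_X (n : ℕ) :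
    (-1) ^ n * expPoly K n - (expPoly K n).comp (-X) =
      ∑ j ∈ range (n + 1), C (((-1) ^ n - (-1) ^ j) / (j ! : K)) * X ^ j := by
  simp only [expPoly, mul_sum, Polynomial.sum_comp, ← sum_sub_distrib]
  refine sum_congr rfl fun j _ => ?_
  simp only [mul_comp, C_comp, X_pow_comp, neg_pow (X : K[X]), div_eq_inv_mul, map_sub,
    map_mul, map_pow, map_neg, map_one]
  ring

theorem expPoly_mul_comp_neg_X [CharZero K] (n : ℕ) :
    expPoly K n * (expPoly K n).comp (-X) = 1 + ∑ j ∈ range (n + 1),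
      C (((-1) ^ n - (-1) ^ j) / (n ! * j ! * (n + j + 1) : K)) * X ^ (n + j + 1) := by
  refine eq_of_derivative_eq_of_coeff_zero_eq ?_ ?_
  · calc derivative (expPoly K n * (expPoly K n).comp (-X))
        = C (n ! : K)⁻¹ * X ^ n * ((-1) ^ n * expPoly K n - (expPoly K n).comp (-X)) := by
          rw [derivative_mul, derivative_comp, derivative_expPoly, sub_comp, mul_comp, C_comp,
            X_pow_comp, neg_pow (X : K[X])]
          simp only [derivative_neg, derivative_X]
          ring
      _ = _ := by
          rw [neg_one_pow_mul_expPoly_sub_comp_neg_X, mul_sum, derivative_add, derivative_one,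
            zero_add, derivative_sum]
          refine sum_congr rfl fun j _ => ?_
          have : (n + j + 1 : K) ≠ 0 := by exact_mod_cast succ_ne_zero (n + j)
          have hcoeff : ((-1) ^ n - (-1) ^ j) / (n ! * j ! * (n + j + 1) : K) * ↑(n + j + 1) =
              (n ! : K)⁻¹ * (((-1) ^ n - (-1) ^ j) / j !) := by
            push_cast
            field_simp
          rw [derivative_C_mul_X_pow, add_tsub_cancel_right, pow_add, hcoeff, C_mul]
          ring
  · simp [expPoly, coeff_zero_eq_eval_zero, eval_finsetSum, sum_range_succ']

end expPoly

theorem Complex.sq_norm_aeval_I_mul (p : ℝ[X]) (y : ℝ) :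
    ‖aeval (Complex.I * y) p‖ ^ 2 = (aeval (Complex.I * y) (p * p.comp (-X))).re := by
  have hconj : conj (aeval (Complex.I * y) p) = aeval (Complex.I * y) (p.comp (-X)) := by
    rw [← Complex.conjAe_coe, ← aeval_algHom_apply, aeval_comp, Complex.conjAe_coe]
    simp
  rw [map_mul, ← hconj, Complex.mul_conj, Complex.ofReal_re, Complex.normSq_eq_norm_sq]

theorem Complex.re_I_mul_ofReal_pow_two_mul (y : ℝ) (q : ℕ) :
    ((Complex.I * y) ^ (2 * q)).re = (-1) ^ q * y ^ (2 * q) := by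
  have hsq : (Complex.I * y) ^ 2 = ((-y ^ 2 : ℝ) : ℂ) := by
    push_cast
    rw [mul_pow, Complex.I_sq]
    ring
  rw [pow_mul, hsq, ← Complex.ofReal_pow, Complex.ofReal_re, neg_pow, pow_mul]

theorem E_eq_sum_range (n : ℕ) (y : ℝ) :
    E n y = ∑ j ∈ range (n + 1),
      ((-1) ^ n - (-1) ^ j) / (n ! * j ! * (n + j + 1) : ℝ) *
        ((Complex.I * y) ^ (n + j + 1)).re := by
  have hp : ∑ k ∈ range (n + 1), (Complex.I * y) ^ k / k ! =
      aeval (Complex.I * y) (expPoly ℝ n) := by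
    simp [expPoly, div_eq_inv_mul]
  rw [E, hp, Complex.sq_norm_aeval_I_mul, expPoly_mul_comp_neg_X]
  simp only [map_add, map_one, map_sum, map_mul, aeval_C, aeval_X_pow, Complex.coe_algebraMap,
    Complex.add_re, Complex.one_re, Complex.re_sum, Complex.re_ofReal_mul, add_sub_cancel_left]

theorem E_of_even {n : ℕ} (hn : Even n) (y : ℝ) :
    E n y = (-1) ^ (n / 2 + 1) * (y ^ (n + 1) / (Nat.factorial n)) *
      ∑ k ∈ Finset.Icc 1 (n / 2), (-1 : ℝ) ^ (k + 1) * y ^ (2 * k - 1) /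
        ((Nat.factorial (2 * k - 1)) * ((k : ℝ) + (n : ℝ) / 2)) := by
  obtain ⟨m, rfl⟩ := even_iff_two_dvd.1 hn
  rw [E_eq_sum_range, sum_range_succ, sum_range_two_mul, Nat.mul_div_cancel_left m two_pos,
    ← Finset.Ico_add_one_right_eq_Icc, sum_Ico_eq_sum_range, add_tsub_cancel_right, mul_sum]
  simp only [(even_two_mul _).neg_one_pow, (odd_two_mul_add_one _).neg_one_pow, sub_self, zero_div,
    zero_mul, zero_add, add_zero]
  refine sum_congr rfl fun i _ => ?_
  rw [show 2 * (1 + i) - 1 = 2 * i + 1 by omega,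
    show 2 * m + (2 * i + 1) + 1 = 2 * (m + i + 1) by ring, Complex.re_I_mul_ofReal_pow_two_mul]
  push_cast
  field_simp
  ring

theorem E_of_odd {n : ℕ} (hn : Odd n) (y : ℝ) :
    E n y = (-1) ^ ((n + 1) / 2 + 1) * (y ^ (n + 1) / (Nat.factorial n)) *
      ∑ k ∈ Finset.range ((n - 1) / 2 + 1), (-1 : ℝ) ^ k * y ^ (2 * k) /
        ((Nat.factorial (2 * k)) * ((k : ℝ) + ((n : ℝ) + 1) / 2)) := by
  obtain ⟨m, rfl⟩ := hn
  rw [E_eq_sum_range, show 2 * m + 1 + 1 = 2 * (m + 1) by ring, sum_range_two_mul,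
    Nat.mul_div_cancel_left _ two_pos, add_tsub_cancel_right, Nat.mul_div_cancel_left m two_pos,
    mul_sum]
  simp only [(even_two_mul _).neg_one_pow, (odd_two_mul_add_one _).neg_one_pow, sub_self, zero_div,
    zero_mul, add_zero]
  refine sum_congr rfl fun i _ => ?_
  rw [show 2 * m + 1 + 2 * i + 1 = 2 * (m + i + 1) by ring, Complex.re_I_mul_ofReal_pow_two_mul]
  push_cast
  field_simp
  ring

theorem E_explicit_formulas_general (y : ℝ) (n : ℕ) :
    (n % 4 = 0 →
      E n y = -(y ^ (n + 1) / (Nat.factorial n)) *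
        ∑ k ∈ Finset.Icc 1 (n / 2),
          (-1 : ℝ) ^ (k + 1) * y ^ (2 * k - 1) /
            ((Nat.factorial (2 * k - 1)) * ((k : ℝ) + (n : ℝ) / 2))) ∧
    (n % 4 = 1 →
      E n y = (y ^ (n + 1) / (Nat.factorial n)) *
        ∑ k ∈ Finset.range ((n - 1) / 2 + 1),
          (-1 : ℝ) ^ k * y ^ (2 * k) /
            ((Nat.factorial (2 * k)) * ((k : ℝ) + ((n : ℝ) + 1) / 2))) ∧
    (n % 4 = 2 →
      E n y = (y ^ (n + 1) / (Nat.factorial n)) *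
        ∑ k ∈ Finset.Icc 1 (n / 2),
          (-1 : ℝ) ^ (k + 1) * y ^ (2 * k - 1) /
            ((Nat.factorial (2 * k - 1)) * ((k : ℝ) + (n : ℝ) / 2))) ∧
    (n % 4 = 3 →
      E n y = -(y ^ (n + 1) / (Nat.factorial n)) *
        ∑ k ∈ Finset.range ((n - 1) / 2 + 1),
          (-1 : ℝ) ^ k * y ^ (2 * k) /
            ((Nat.factorial (2 * k)) * ((k : ℝ) + ((n : ℝ) + 1) / 2))) := by
  refine ⟨fun h => ?_, fun h => ?_, fun h => ?_, fun h => ?_⟩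
  · rw [E_of_even (Nat.even_iff.2 (by omega)), (Nat.odd_iff.2 (by omega)).neg_one_pow, neg_one_mul]
  · rw [E_of_odd (Nat.odd_iff.2 (by omega)), (Nat.even_iff.2 (by omega)).neg_one_pow, one_mul]
  · rw [E_of_even (Nat.even_iff.2 (by omega)), (Nat.even_iff.2 (by omega)).neg_one_pow, one_mul]
  · rw [E_of_odd (Nat.odd_iff.2 (by omega)), (Nat.odd_iff.2 (by omega)).neg_one_pow, neg_one_mul]

/-- Explicit formulas for `E n y` according to the residue of `n` modulo `4`. -/
theorem E_explicit_formulas (y : ℝ) (n : ℕ) (hn : 0 < n) :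
    (n % 4 = 0 →
      E n y = -(y ^ (n + 1) / (Nat.factorial n)) *
        ∑ k ∈ Finset.Icc 1 (n / 2),
          (-1 : ℝ) ^ (k + 1) * y ^ (2 * k - 1) /
            ((Nat.factorial (2 * k - 1)) * ((k : ℝ) + (n : ℝ) / 2))) ∧
    (n % 4 = 1 →
      E n y = (y ^ (n + 1) / (Nat.factorial n)) *
        ∑ k ∈ Finset.range ((n - 1) / 2 + 1),
          (-1 : ℝ) ^ k * y ^ (2 * k) /
            ((Nat.factorial (2 * k)) * ((k : ℝ) + ((n : ℝ) + 1) / 2))) ∧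
    (n % 4 = 2 →
      E n y = (y ^ (n + 1) / (Nat.factorial n)) *
        ∑ k ∈ Finset.Icc 1 (n / 2),
          (-1 : ℝ) ^ (k + 1) * y ^ (2 * k - 1) /
            ((Nat.factorial (2 * k - 1)) * ((k : ℝ) + (n : ℝ) / 2))) ∧
    (n % 4 = 3 →
      E n y = -(y ^ (n + 1) / (Nat.factorial n)) *
        ∑ k ∈ Finset.range ((n - 1) / 2 + 1),
          (-1 : ℝ) ^ k * y ^ (2 * k) /
            ((Nat.factorial (2 * k)) * ((k : ℝ) + ((n : ℝ) + 1) / 2))) :=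
  E_explicit_formulas_general y n
end

section
/- For every positive integer n with n ≡ 1 (mod 4) or n ≡ 2 (mod 4), there exists ρ_n > 0 such that V⁺_n ∩ [0, ρ_n] = {0}; that is, 0 ∈ V⁺_n but no y ∈ (0, ρ_n] belongs to V⁺_n. -/
/-!
Write `S_n(y) = ∑_{k<n} (i y)^k / k!`, so that `V⁺_n` is cut out by `‖S_{n+1}(y)‖ ≤ 1`.
Since `d/dy S_{n+1} = i S_n` and `⟪S_n, i S_n⟫ = 0`, the derivative of `‖S_{n+1}‖²` is
`2 ⟪(i y)^n / n!, i S_n⟫`, which equals `2 yⁿ/n! · Re S_n` when `n ≡ 1` and `2 yⁿ/n! · Im S_n`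
when `n ≡ 2 (mod 4)`. For `0 < y < 1/2` the tail estimates `S_n ≈ 1` and `S_n ≈ 1 + i y` make
these positive, so `‖S_{n+1}(y)‖²` increases strictly on `[0, 1/2]` from its value `1` at `0`.
-/

/-- The upper vertical slice of the unscaled stability region along the imaginary axis:
`V⁺_n = {y ∈ ℝ : y ≥ 0 and |∑_{k=0}^n (i y)^k / k!| ≤ 1}`. -/
noncomputable def Vplus (n : ℕ) : Set ℝ :=
  {y : ℝ | 0 ≤ y ∧
    ‖∑ k ∈ Finset.range (n + 1), (Complex.I * (y : ℂ)) ^ k / (Nat.factorial k)‖ ≤ 1}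

open Complex Finset Nat
open scoped InnerProductSpace

noncomputable def expPartialSum (n : ℕ) (z : ℂ) : ℂ :=
  ∑ k ∈ range n, z ^ k / k !

namespace expPartialSum

theorem succ (n : ℕ) (z : ℂ) : expPartialSum (n + 1) z = expPartialSum n z + z ^ n / n ! :=
  sum_range_succ _ _

@[simp]
theorem one (z : ℂ) : expPartialSum 1 z = 1 := by
  simp [expPartialSum]

@[simp]
theorem two (z : ℂ) : expPartialSum 2 z = 1 + z := by
  simp [expPartialSum, sum_range_succ]

@[simp]
theorem succ_apply_zero (n : ℕ) : expPartialSum (n + 1) 0 = 1 := by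
  induction n with
  | zero => simp
  | succ n ih => rw [succ, ih]; simp

theorem hasDerivAt_succ (n : ℕ) (z : ℂ) :
    HasDerivAt (expPartialSum (n + 1)) (expPartialSum n z) z := by
  induction n with
  | zero =>
    rw [show expPartialSum 1 = fun _ => 1 from funext one]
    simpa [expPartialSum] using hasDerivAt_const z (1 : ℂ)
  | succ n ih =>
    have hterm : HasDerivAt (fun w : ℂ => w ^ (n + 1) / (n + 1)!) (z ^ n / n !) z := by
      refine ((hasDerivAt_pow (n + 1) z).div_const ((n + 1)! : ℂ)).congr_deriv ?_
      rw [Nat.add_sub_cancel, factorial_succ]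
      push_cast
      field_simp
    have h := ih.add hterm
    simp only [← succ] at h
    exact funext (succ (n + 1)) ▸ h

theorem norm_sub_le {z : ℂ} (hz : ‖z‖ ≤ 1 / 2) (m n : ℕ) :
    ‖expPartialSum (m + n) z - expPartialSum m z‖ ≤ 2 * ‖z‖ ^ m := by
  rw [expPartialSum, expPartialSum, sum_range_add, add_sub_cancel_left]
  calc ‖∑ k ∈ range n, z ^ (m + k) / (m + k)!‖
      ≤ ∑ k ∈ range n, ‖z‖ ^ m * (1 / 2) ^ k := by
        refine norm_sum_le_of_le _ fun k _ => ?_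
        have hfac : (1 : ℝ) ≤ (m + k)! := by exact_mod_cast (m + k).factorial_pos
        rw [norm_div, norm_pow, norm_natCast, pow_add]
        calc ‖z‖ ^ m * ‖z‖ ^ k / (m + k)! ≤ ‖z‖ ^ m * ‖z‖ ^ k := div_le_self (by positivity) hfac
          _ ≤ ‖z‖ ^ m * (1 / 2) ^ k := by gcongr
    _ = ‖z‖ ^ m * ∑ k ∈ range n, (1 / 2 : ℝ) ^ k := (mul_sum ..).symm
    _ ≤ ‖z‖ ^ m * 2 := by gcongr; exact sum_geometric_two_le n
    _ = 2 * ‖z‖ ^ m := mul_comm ..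

end expPartialSum

theorem Complex.inner_self_I_mul (w : ℂ) : ⟪w, I * w⟫_ℝ = 0 := by
  simp only [Complex.inner, mul_assoc, mul_conj, mul_re, I_re, I_im, ofReal_re,
    ofReal_im]
  ring

theorem re_expPartialSum_pos {n : ℕ} (hn : 1 ≤ n) {z : ℂ} (hz : ‖z‖ < 1 / 2) :
    0 < (expPartialSum n z).re := by
  obtain ⟨k, rfl⟩ := Nat.exists_eq_add_of_le hn
  have h := (abs_re_le_norm _).trans (expPartialSum.norm_sub_le hz.le 1 k)
  rw [expPartialSum.one, sub_re, one_re, pow_one] at h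
  linarith [abs_le.mp h]

theorem im_expPartialSum_I_mul_pos {n : ℕ} (hn : 2 ≤ n) {y : ℝ} (hy0 : 0 < y) (hy : y < 1 / 2) :
    0 < (expPartialSum n (I * y)).im := by
  obtain ⟨k, rfl⟩ := Nat.exists_eq_add_of_le hn
  have hz : ‖I * (y : ℂ)‖ = y := by simp [hy0.le]
  have h := (abs_im_le_norm _).trans (expPartialSum.norm_sub_le (hz.trans_lt hy).le 2 k)
  rw [expPartialSum.two, sub_im, add_im, one_im, hz, mul_im, I_re, I_im, ofReal_re,
    ofReal_im] at h
  nlinarith [abs_le.mp h]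

theorem hasDerivAt_norm_sq_expPartialSum_I_mul (n : ℕ) (y : ℝ) :
    HasDerivAt (fun y : ℝ => ‖expPartialSum (n + 1) (I * y)‖ ^ 2)
      (2 * ⟪(I * y) ^ n / n !, I * expPartialSum n (I * y)⟫_ℝ) y := by
  have hpath : HasDerivAt (fun y : ℝ => expPartialSum (n + 1) (I * y))
      (I * expPartialSum n (I * y)) y := by
    have := (expPartialSum.hasDerivAt_succ n (I * y)).comp (y : ℂ)
      ((hasDerivAt_id (y : ℂ)).const_mul I)
    simpa [mul_comm] using this.comp_ofReal
  convert hpath.norm_sq using 2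
  rw [expPartialSum.succ, inner_add_left, Complex.inner_self_I_mul, zero_add]

theorem inner_pow_div_factorial_I_mul_pos {n : ℕ} (hn : n % 4 = 1 ∨ n % 4 = 2) {y : ℝ}
    (hy0 : 0 < y) (hy : y < 1 / 2) :
    0 < ⟪(I * y) ^ n / n !, I * expPartialSum n (I * y)⟫_ℝ := by
  have hr : 0 < y ^ n / n ! := by positivity
  have hterm : (I * y) ^ n / n ! = I ^ (n % 4) * ((y ^ n / n ! : ℝ) : ℂ) := by
    rw [mul_pow, ← I_pow_eq_pow_mod]
    push_cast
    ring
  rw [hterm]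
  rcases hn with hn | hn
  · have hre := re_expPartialSum_pos (n := n) (by omega) (z := I * y)
      (by simpa [abs_of_pos hy0] using hy)
    rw [hn, pow_one, Complex.inner]
    simp only [mul_re, mul_im, I_re, I_im, map_mul, conj_I, conj_ofReal, neg_re, neg_im,
      ofReal_re, ofReal_im]
    nlinarith
  · have him := im_expPartialSum_I_mul_pos (n := n) (by omega) hy0 hy
    rw [hn, I_sq, Complex.inner]
    simp only [mul_re, mul_im, I_re, I_im, map_mul, map_neg, map_one, conj_ofReal,
      neg_re, neg_im, one_re, one_im, ofReal_re, ofReal_im]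
    nlinarith

theorem one_lt_norm_expPartialSum_I_mul {n : ℕ} (hn : n % 4 = 1 ∨ n % 4 = 2) {y : ℝ}
    (hy0 : 0 < y) (hy : y ≤ 1 / 2) : 1 < ‖expPartialSum (n + 1) (I * y)‖ := by
  set f : ℝ → ℝ := fun y => ‖expPartialSum (n + 1) (I * y)‖ ^ 2
  have hderiv := hasDerivAt_norm_sq_expPartialSum_I_mul n
  have hmono : StrictMonoOn f (Set.Icc 0 (1 / 2)) := by
    refine strictMonoOn_of_hasDerivWithinAt_pos (convex_Icc 0 _)
      (fun x _ => (hderiv x).continuousAt.continuousWithinAt)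
      (fun x _ => (hderiv x).hasDerivWithinAt) fun x hx => ?_
    rw [interior_Icc] at hx
    exact mul_pos two_pos (inner_pow_div_factorial_I_mul_pos hn hx.1 hx.2)
  have h := hmono ⟨le_rfl, by norm_num⟩ ⟨hy0.le, hy⟩ hy0
  simp only [f, ofReal_zero, mul_zero, expPartialSum.succ_apply_zero, norm_one, one_pow] at h
  exact (one_lt_sq_iff₀ (norm_nonneg _)).1 h

theorem mem_Vplus_iff {n : ℕ} {y : ℝ} :
    y ∈ Vplus n ↔ 0 ≤ y ∧ ‖expPartialSum (n + 1) (I * y)‖ ≤ 1 :=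
  Iff.rfl

theorem Vplus_inter_Icc_eq_singleton_general (n : ℕ) (hmod : n % 4 = 1 ∨ n % 4 = 2) :
    ∃ ρ : ℝ, 0 < ρ ∧ Vplus n ∩ Set.Icc 0 ρ = {0} := by
  refine ⟨1 / 2, by norm_num, Set.eq_singleton_iff_unique_mem.2 ⟨?_, ?_⟩⟩
  · simp [mem_Vplus_iff]
  · rintro y ⟨hyV, -, hy⟩
    rw [mem_Vplus_iff] at hyV
    by_contra hne
    exact (one_lt_norm_expPartialSum_I_mul hmod (hyV.1.lt_of_ne' hne) hy).not_ge hyV.2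

/-- For `n ≡ 1` or `n ≡ 2 (mod 4)`, there is `ρ_n > 0` with `V⁺_n ∩ [0, ρ_n] = {0}`. -/
theorem Vplus_inter_Icc_eq_singleton (n : ℕ) (hn : 0 < n) (hmod : n % 4 = 1 ∨ n % 4 = 2) :
    ∃ ρ : ℝ, 0 < ρ ∧ Vplus n ∩ Set.Icc 0 ρ = {0} :=
  Vplus_inter_Icc_eq_singleton_general n hmod
end

section
/- For every positive integer n with n ≡ 0 (mod 4) or n ≡ 3 (mod 4), there exists ρ_n > 0 such that the interval [0, ρ_n] is contained in V⁺_n; that is, every y ∈ [0, ρ_n] satisfies |∑_{k=0}^n (iy)^k/k!| ≤ 1. -/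
open Complex Finset Set Topology

noncomputable def expTrunc (n : ℕ) (z : ℂ) : ℂ := ∑ k ∈ range (n + 1), z ^ k / k.factorial

@[simp]
lemma expTrunc_zero_right (n : ℕ) : expTrunc n 0 = 1 := by
  simp [expTrunc, sum_range_succ']

lemma expTrunc_succ (n : ℕ) (z : ℂ) :
    expTrunc (n + 1) z = expTrunc n z + z ^ (n + 1) / (n + 1).factorial :=
  sum_range_succ _ _

lemma continuous_expTrunc (n : ℕ) : Continuous (expTrunc n) := by
  unfold expTrunc; fun_prop

lemma hasDerivAt_expTrunc_succ (n : ℕ) (z : ℂ) :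
    HasDerivAt (expTrunc (n + 1)) (expTrunc n z) z := by
  have hterm (k : ℕ) :
      HasDerivAt (fun w : ℂ => w ^ (k + 1) / (k + 1).factorial) (z ^ k / k.factorial) z := by
    refine ((hasDerivAt_pow (k + 1) z).div_const ((k + 1).factorial : ℂ)).congr_deriv ?_
    rw [Nat.factorial_succ, Nat.cast_mul]
    field_simp
    push_cast
    ring
  unfold expTrunc
  simp_rw [sum_range_succ' _ (n + 1), pow_zero, Nat.factorial_zero, Nat.cast_one, div_one]
  exact ((HasDerivAt.fun_sum fun k _ => hterm k).add_const _)

lemma hasDerivAt_expTrunc_succ_I_mul (n : ℕ) (y : ℝ) :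
    HasDerivAt (fun t : ℝ => expTrunc (n + 1) (I * t)) (I * expTrunc n (I * y)) y := by
  have hlin : HasDerivAt (fun w : ℂ => I * w) I y := by
    simpa using (hasDerivAt_id (y : ℂ)).const_mul I
  simpa [mul_comm] using ((hasDerivAt_expTrunc_succ n _).comp _ hlin).comp_ofReal

lemma hasDerivAt_norm_sq_expTrunc_succ_I_mul (n : ℕ) (y : ℝ) :
    HasDerivAt (fun t : ℝ => ‖expTrunc (n + 1) (I * t)‖ ^ 2)
      (2 * (y ^ (n + 1) / (n + 1).factorial) * ((-I) ^ (n + 1) * I * expTrunc n (I * y)).re) y := by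
  refine (hasDerivAt_expTrunc_succ_I_mul n y).norm_sq.congr_deriv ?_
  have hconj : (starRingEnd ℂ) ((I * y) ^ (n + 1) / (n + 1).factorial) =
      (-I) ^ (n + 1) * (y ^ (n + 1) / (n + 1).factorial : ℝ) := by
    simp [map_div₀, mul_pow, mul_div_assoc]
  set E := expTrunc n (I * y)
  set r : ℝ := y ^ (n + 1) / (n + 1).factorial
  rw [Complex.inner, expTrunc_succ, map_add, mul_add, hconj, add_re, mul_assoc I, mul_conj,
    show I * E * ((-I) ^ (n + 1) * r) = r * ((-I) ^ (n + 1) * I * E) by ring, re_ofReal_mul]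
  simp [mul_assoc]

lemma re_neg_I_pow_mul_I_mul_nonpos {n : ℕ} (hn : n % 4 = 0 ∨ n % 4 = 3) {z : ℂ}
    (hre : 0 ≤ z.re) (him : 0 ≤ z.im) : ((-I) ^ n * I * z).re ≤ 0 := by
  have hperiod : (-I) ^ n = (-I) ^ (n % 4) := by
    conv_lhs => rw [← Nat.div_add_mod n 4, pow_add, pow_mul]
    norm_num
  rcases hn with h | h <;> rw [hperiod, h] <;> simp [pow_succ] <;> assumption

lemma eventually_nonneg_re_expTrunc_I_mul (n : ℕ) :
    ∀ᶠ y : ℝ in 𝓝 0, 0 ≤ (expTrunc n (I * y)).re := by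
  have hcont : Continuous fun y : ℝ => (expTrunc n (I * y)).re :=
    continuous_re.comp ((continuous_expTrunc n).comp (by fun_prop))
  have hlim := hcont.tendsto 0
  simp only [ofReal_zero, mul_zero, expTrunc_zero_right, one_re] at hlim
  exact (hlim.eventually_const_lt zero_lt_one).mono fun _ => le_of_lt

lemma eventually_nonneg_re_im_expTrunc_I_mul (n : ℕ) :
    ∀ᶠ y : ℝ in 𝓝[≥] 0, 0 ≤ (expTrunc n (I * y)).re ∧ 0 ≤ (expTrunc n (I * y)).im := by
  refine ((eventually_nonneg_re_expTrunc_I_mul n).filter_mono nhdsWithin_le_nhds).and ?_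
  cases n with
  | zero => simp [expTrunc]
  | succ n =>
    obtain ⟨ρ, hρ, hre⟩ := mem_nhdsGE_iff_exists_Icc_subset.1
      ((eventually_nonneg_re_expTrunc_I_mul n).filter_mono nhdsWithin_le_nhds)
    have hderiv (t : ℝ) : HasDerivAt (fun t : ℝ => (expTrunc (n + 1) (I * t)).im)
        (I * expTrunc n (I * t)).im t :=
      imCLM.hasFDerivAt.comp_hasDerivAt t (hasDerivAt_expTrunc_succ_I_mul n t)
    have hmono : MonotoneOn (fun t : ℝ => (expTrunc (n + 1) (I * t)).im) (Icc 0 ρ) :=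
      monotoneOn_of_hasDerivWithinAt_nonneg (convex_Icc 0 ρ)
        (fun t _ => (hderiv t).continuousAt.continuousWithinAt)
        (fun t _ => (hderiv t).hasDerivWithinAt) (fun t ht => by simpa using hre (interior_subset ht))
    filter_upwards [Icc_mem_nhdsGE hρ] with y hy
    simpa using hmono ⟨le_rfl, hρ.le⟩ hy hy.1

/-- For `n ≡ 0` or `n ≡ 3 (mod 4)`, there is `ρ_n > 0` with `[0, ρ_n] ⊆ V⁺_n`. -/
theorem Icc_subset_Vplus (n : ℕ) (hn : 0 < n) (hmod : n % 4 = 0 ∨ n % 4 = 3) :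
    ∃ ρ : ℝ, 0 < ρ ∧ Set.Icc (0 : ℝ) ρ ⊆ Vplus n := by
  obtain ⟨m, rfl⟩ : ∃ m, n = m + 1 := ⟨n - 1, by omega⟩
  obtain ⟨ρ, hρ, hquad⟩ :=
    mem_nhdsGE_iff_exists_Icc_subset.1 (eventually_nonneg_re_im_expTrunc_I_mul m)
  have hanti : AntitoneOn (fun t : ℝ => ‖expTrunc (m + 1) (I * t)‖ ^ 2) (Icc 0 ρ) :=
    antitoneOn_of_hasDerivWithinAt_nonpos (convex_Icc 0 ρ)
      (fun t _ => (hasDerivAt_norm_sq_expTrunc_succ_I_mul m t).continuousAt.continuousWithinAt)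
      (fun t _ => (hasDerivAt_norm_sq_expTrunc_succ_I_mul m t).hasDerivWithinAt)
      (fun t ht => by
        obtain ⟨hre, him⟩ := hquad (interior_subset ht)
        rw [interior_Icc] at ht
        exact mul_nonpos_of_nonneg_of_nonpos (by positivity [ht.1.le])
          (re_neg_I_pow_mul_I_mul_nonpos hmod hre him))
  refine ⟨ρ, hρ, fun y hy => ⟨hy.1, ?_⟩⟩
  have hsq : ‖expTrunc (m + 1) (I * y)‖ ^ 2 ≤ 1 := by
    simpa using hanti ⟨le_rfl, hρ.le⟩ hy hy.1
  exact (sq_le_one_iff₀ (norm_nonneg _)).1 hsq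
end

section
/- The sequence of polynomials f_m converges uniformly to the function z ↦ −sin(z) on every compact subset of ℂ as m → +∞; that is, for every compact K ⊂ ℂ and every ε > 0 there exists m₀ such that for all m ≥ m₀ and all z ∈ K, |f_m(z) + sin(z)| < ε. -/
/-- The polynomial `f_m(z) = -((4m+1)/2) ∑_{k=1}^{2m} (-1)^{k+1} z^{2k-1} / ((2k-1)!(k+2m))`. -/
noncomputable def f (m : ℕ) (z : ℂ) : ℂ :=
  -((4 * (m : ℂ) + 1) / 2) *
    ∑ k ∈ Finset.Icc 1 (2 * m),
      (-1 : ℂ) ^ (k + 1) * z ^ (2 * k - 1) /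
        ((Nat.factorial (2 * k - 1)) * ((k : ℂ) + 2 * (m : ℂ)))

/-!
With `sinTerm z n = (-1)^n z^(2n+1) / (2n+1)!` the terms of the sine series, the coefficient
`(4m+1) / (2(k+2m))` in `f m` at `k = n + 1` is `1 - (2n+1)/(2n+2+4m)`, so `f m z` is
`∑_{n<2m} sinTerm z n * (2n+1)/(2n+2+4m)` minus a partial sum of the sine series.
Since `(2n+1) ‖sinTerm z n‖ ≤ R^(2n+1)/(2n)!` for `‖z‖ ≤ R`, the first sum is at most
`R cosh R / (4m+2)`; the partial sums converge uniformly on `‖z‖ ≤ R` by the Weierstrass M-test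
against the series of `sinh R`.
-/

open Finset Filter Topology Nat

noncomputable def sinTerm (z : ℂ) (n : ℕ) : ℂ :=
  (-1) ^ n * z ^ (2 * n + 1) / (2 * n + 1)!

lemma f_eq_sum_sub_sum (m : ℕ) (z : ℂ) :
    f m z = ∑ n ∈ range (2 * m), sinTerm z n * ((2 * n + 1) / (2 * n + 2 + 4 * m)) -
      ∑ n ∈ range (2 * m), sinTerm z n := by
  rw [f, ← Ico_add_one_right_eq_Icc, sum_Ico_eq_sum_range, Nat.add_sub_cancel, mul_sum,
    ← sum_sub_distrib]
  refine sum_congr rfl fun n _ => ?_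
  rw [show 2 * (1 + n) - 1 = 2 * n + 1 by omega, sinTerm]
  have hfac : ((2 * n + 1)! : ℂ) ≠ 0 := Nat.cast_ne_zero.2 (factorial_ne_zero _)
  have hden : (1 + n + m * 2 : ℂ) ≠ 0 := by exact_mod_cast (by omega : 1 + n + m * 2 ≠ 0)
  push_cast
  rw [show (2 * n + 2 + 4 * m : ℂ) = 2 * (1 + n + 2 * m) by ring]
  field_simp
  ring

lemma norm_sinTerm_le {z : ℂ} {R : ℝ} (hz : ‖z‖ ≤ R) (n : ℕ) :
    ‖sinTerm z n‖ ≤ R ^ (2 * n + 1) / (2 * n + 1)! := by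
  rw [sinTerm, norm_div, norm_mul, norm_pow, norm_neg, norm_one, one_pow, one_mul, norm_pow,
    Complex.norm_natCast]
  gcongr

lemma norm_sinTerm_mul_le {z : ℂ} {R : ℝ} (hz : ‖z‖ ≤ R) (n : ℕ) :
    ‖sinTerm z n‖ * (2 * n + 1) ≤ R * (R ^ (2 * n) / (2 * n)!) := by
  calc ‖sinTerm z n‖ * (2 * n + 1) ≤ R ^ (2 * n + 1) / (2 * n + 1)! * (2 * n + 1) := by
        gcongr; exact norm_sinTerm_le hz n
    _ = R * (R ^ (2 * n) / (2 * n)!) := by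
        rw [factorial_succ]; push_cast; field_simp; ring

lemma norm_sum_sinTerm_mul_le {z : ℂ} {R : ℝ} (hz : ‖z‖ ≤ R) (m N : ℕ) :
    ‖∑ n ∈ range N, sinTerm z n * ((2 * n + 1) / (2 * n + 2 + 4 * m))‖ ≤
      R * Real.cosh R / (4 * m + 2) := by
  have hR : 0 ≤ R := (norm_nonneg z).trans hz
  have hcosh : ∑ n ∈ range N, R ^ (2 * n) / (2 * n)! ≤ Real.cosh R :=
    sum_le_hasSum _ (fun n _ => by positivity) (Real.hasSum_cosh R)
  calc _ ≤ ∑ n ∈ range N, R * (R ^ (2 * n) / (2 * n)!) / (4 * m + 2) := by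
        refine (norm_sum_le _ _).trans (sum_le_sum fun n _ => ?_)
        have hnum : ‖(2 * n + 1 : ℂ)‖ = 2 * n + 1 := by
          exact_mod_cast Complex.norm_natCast (2 * n + 1)
        have hden : ‖(2 * n + 2 + 4 * m : ℂ)‖ = 2 * n + 2 + 4 * m := by
          exact_mod_cast Complex.norm_natCast (2 * n + 2 + 4 * m)
        rw [norm_mul, norm_div, hnum, hden, mul_div_assoc']
        gcongr ?_ / ?_
        · exact norm_sinTerm_mul_le hz n
        · linarith [(n.cast_nonneg : (0 : ℝ) ≤ n)]
    _ ≤ R * Real.cosh R / (4 * m + 2) := by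
        rw [← sum_div, ← mul_sum]; gcongr

lemma tendstoUniformlyOn_zero_of_norm_le {ι α E : Type*} [SeminormedAddCommGroup E]
    {F : ι → α → E} {b : ι → ℝ} {l : Filter ι} {s : Set α} (hb : Tendsto b l (𝓝 0))
    (hF : ∀ i, ∀ x ∈ s, ‖F i x‖ ≤ b i) : TendstoUniformlyOn F 0 l s :=
  Metric.tendstoUniformlyOn_iff.2 fun ε hε => (hb.eventually (gt_mem_nhds hε)).mono
    fun i hi x hx => by simpa [dist_eq_norm] using (hF i x hx).trans_lt hi

lemma tendstoUniformlyOn_sum_sinTerm (R : ℝ) :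
    TendstoUniformlyOn (fun N z => ∑ n ∈ range N, sinTerm z n) Complex.sin atTop
      (Metric.closedBall 0 R) := by
  have h := tendstoUniformlyOn_tsum_nat (Real.hasSum_sinh R).summable
    fun n z hz => norm_sinTerm_le (mem_closedBall_zero_iff.1 hz) n
  rwa [show (fun z => ∑' n, sinTerm z n) = Complex.sin from
    funext fun z => (Complex.hasSum_sin z).tsum_eq] at h

lemma tendstoUniformlyOn_f_neg_sin (R : ℝ) :
    TendstoUniformlyOn f (fun z => -Complex.sin z) atTop (Metric.closedBall 0 R) := by
  have hcorr : TendstoUniformlyOn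
      (fun m z => ∑ n ∈ range (2 * m), sinTerm z n * ((2 * n + 1) / (2 * n + 2 + 4 * m)))
      0 atTop (Metric.closedBall 0 R) := by
    refine tendstoUniformlyOn_zero_of_norm_le (b := fun m : ℕ => R * Real.cosh R / (4 * m + 2))
      ?_ fun m z hz => norm_sum_sinTerm_mul_le (mem_closedBall_zero_iff.1 hz) m _
    exact tendsto_const_nhds.div_atTop <| tendsto_atTop_add_const_right _ 2 <|
      tendsto_natCast_atTop_atTop.const_mul_atTop four_pos
  have hsin : TendstoUniformlyOn (fun m z => ∑ n ∈ range (2 * m), sinTerm z n)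
      Complex.sin atTop (Metric.closedBall 0 R) := fun u hu =>
    (tendsto_id.const_mul_atTop' two_pos).eventually (tendstoUniformlyOn_sum_sinTerm R u hu)
  convert hcorr.sub hsin using 1
  · ext m z; exact f_eq_sum_sub_sum m z
  · ext z; simp

/-- The polynomials `f_m` converge uniformly to `-sin` on compact subsets of `ℂ`. -/
theorem f_tendstoUniformlyOn_neg_sin (K : Set ℂ) (hK : IsCompact K) (ε : ℝ) (hε : 0 < ε) :
    ∃ m₀ : ℕ, 0 < m₀ ∧ ∀ m : ℕ, m₀ ≤ m → ∀ z ∈ K,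
      ‖f m z + Complex.sin z‖ < ε := by
  obtain ⟨R, hKR⟩ := hK.isBounded.subset_closedBall 0
  obtain ⟨m₀, hm₀⟩ := eventually_atTop.1
    (Metric.tendstoUniformlyOn_iff.1 ((tendstoUniformlyOn_f_neg_sin R).mono hKR) ε hε)
  refine ⟨m₀ + 1, m₀.succ_pos, fun m hm z hz => ?_⟩
  simpa [dist_eq_norm'] using hm₀ m (by omega) z hz
end

section
/- For every ρ > 0, every positive integer m, and every z ∈ ℂ with |z| ≤ ρ, the difference between f_m and the degree-(4m−1) Maclaurin polynomial of −sin satisfies |f_m(z) − f̃_m(z)| ≤ ρ·cosh(ρ)/(4m), where f̃_m(z) := −∑_{k=0}^{2m−1} (−1)^k z^{2k+1}/(2k+1)!. -/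
/-- The degree-`(4m-1)` Maclaurin polynomial of `-sin`:
`f̃_m(z) = -∑_{k=0}^{2m-1} (-1)^k z^{2k+1} / (2k+1)!`. -/
noncomputable def fTilde (m : ℕ) (z : ℂ) : ℂ :=
  -∑ k ∈ Finset.range (2 * m), (-1 : ℂ) ^ k * z ^ (2 * k + 1) / (Nat.factorial (2 * k + 1))

open Finset

lemma f_eq_sum_range (m : ℕ) (z : ℂ) :
    f m z = -((4 * (m : ℂ) + 1) / 2) * ∑ k ∈ range (2 * m),
      (-1 : ℂ) ^ k * z ^ (2 * k + 1) / ((2 * k + 1).factorial * ((k + 2 * m + 1 : ℕ) : ℂ)) := by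
  rw [f, ← Ico_add_one_right_eq_Icc, sum_Ico_eq_sum_range, Nat.add_sub_cancel]
  congr 1
  refine sum_congr rfl fun k _ => ?_
  rw [show 2 * (1 + k) - 1 = 2 * k + 1 by omega, pow_add, pow_add]
  push_cast
  ring

lemma f_sub_fTilde_eq_sum (m : ℕ) (z : ℂ) :
    f m z - fTilde m z = ∑ k ∈ range (2 * m),
      (-1 : ℂ) ^ k * z ^ (2 * k + 1) / ((2 * k).factorial * (2 * ((k + 2 * m + 1 : ℕ) : ℂ))) := by
  rw [f_eq_sum_range, fTilde, sub_neg_eq_add, mul_sum, ← sum_add_distrib]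
  refine sum_congr rfl fun k _ => ?_
  have hk : ((k + 2 * m + 1 : ℕ) : ℂ) ≠ 0 := Nat.cast_ne_zero.2 (k + 2 * m).succ_ne_zero
  have h2k : ((2 * k).factorial : ℂ) ≠ 0 := Nat.cast_ne_zero.2 (2 * k).factorial_ne_zero
  have hodd : ((2 * k + 1 : ℕ) : ℂ) ≠ 0 := Nat.cast_ne_zero.2 (2 * k).succ_ne_zero
  rw [Nat.factorial_succ, Nat.cast_mul]
  field_simp
  push_cast
  ring

lemma sum_range_pow_two_mul_div_factorial_le_cosh (x : ℝ) (n : ℕ) :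
    ∑ k ∈ range n, x ^ (2 * k) / (2 * k).factorial ≤ Real.cosh x :=
  sum_le_hasSum _ (fun k _ => div_nonneg ((even_two_mul k).pow_nonneg x) (Nat.cast_nonneg _))
    (Real.hasSum_cosh x)

lemma norm_f_sub_fTilde_summand_le {m : ℕ} (hm : 0 < m) (k : ℕ) {z : ℂ} {ρ : ℝ} (hz : ‖z‖ ≤ ρ) :
    ‖(-1 : ℂ) ^ k * z ^ (2 * k + 1) / ((2 * k).factorial * (2 * ((k + 2 * m + 1 : ℕ) : ℂ)))‖ ≤
      ρ ^ (2 * k) / (2 * k).factorial * (ρ / (4 * m)) := by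
  have hρ : 0 ≤ ρ := (norm_nonneg z).trans hz
  have hden : 4 * (m : ℝ) * (2 * k).factorial ≤ (2 * k).factorial * (2 * (k + 2 * m + 1 : ℕ)) := by
    push_cast
    nlinarith [(Nat.cast_pos (α := ℝ)).2 (2 * k).factorial_pos, (k.cast_nonneg : (0 : ℝ) ≤ k)]
  simp only [norm_div, norm_mul, norm_pow, norm_neg, norm_one, one_pow, one_mul,
    Complex.norm_natCast, Complex.norm_ofNat]
  calc ‖z‖ ^ (2 * k + 1) / ((2 * k).factorial * (2 * (k + 2 * m + 1 : ℕ)))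
      ≤ ρ ^ (2 * k + 1) / (4 * m * (2 * k).factorial) :=
        div_le_div₀ (pow_nonneg hρ _) (pow_le_pow_left₀ (norm_nonneg z) hz _) (by positivity) hden
    _ = ρ ^ (2 * k) / (2 * k).factorial * (ρ / (4 * m)) := by
        rw [pow_succ]; field_simp

theorem f_sub_fTilde_bound_general (ρ : ℝ) (m : ℕ) (hm : 0 < m)
    (z : ℂ) (hz : ‖z‖ ≤ ρ) :
    ‖f m z - fTilde m z‖ ≤ ρ * Real.cosh ρ / (4 * m) := by
  have hρ : 0 ≤ ρ / (4 * m) := div_nonneg ((norm_nonneg z).trans hz) (by positivity)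
  calc ‖f m z - fTilde m z‖
      ≤ ∑ k ∈ range (2 * m), ρ ^ (2 * k) / (2 * k).factorial * (ρ / (4 * m)) := by
        rw [f_sub_fTilde_eq_sum]
        exact (norm_sum_le _ _).trans (sum_le_sum fun k _ => norm_f_sub_fTilde_summand_le hm k hz)
    _ ≤ Real.cosh ρ * (ρ / (4 * m)) := by
        rw [← sum_mul]
        exact mul_le_mul_of_nonneg_right (sum_range_pow_two_mul_div_factorial_le_cosh ρ _) hρ
    _ = ρ * Real.cosh ρ / (4 * m) := by ring

/-- For `|z| ≤ ρ`, the difference `|f_m(z) - f̃_m(z)|` is at most `ρ cosh ρ / (4m)`. -/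
theorem f_sub_fTilde_bound (ρ : ℝ) (hρ : 0 < ρ) (m : ℕ) (hm : 0 < m)
    (z : ℂ) (hz : ‖z‖ ≤ ρ) :
    ‖f m z - fTilde m z‖ ≤ ρ * Real.cosh ρ / (4 * m) :=
  f_sub_fTilde_bound_general ρ m hm z hz
end

section
/- The Szegő region Σ₁ is a strictly convex subset of ℂ: it is convex, and for any two distinct points z, w ∈ Σ₁ and any t ∈ (0,1), the point t·z + (1−t)·w lies in the interior of Σ₁. -/
/-- The Szegő region `Σ₁ = {z ∈ ℂ : |z e^{1-z}| ≤ 1} ∩ D₁`. -/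
noncomputable def Szego : Set ℂ :=
  {z : ℂ | ‖z * Complex.exp (1 - z)‖ ≤ 1} ∩ {z : ℂ | ‖z‖ ≤ 1}

/-!
Writing `z = x + iy`, the condition `|z e^{1-z}| ≤ 1` reads `x² + y² ≤ e^{2x-2}`, so `Σ₁` is the
region `|y| ≤ √h(x)`, `h(x) = e^{2x-2} - x²`, over an interval of the real axis ending at `x = 1`.
The half-width `√h` is strictly concave because `h'² - 2 h h'' = 4 e^{2x-2} (2x² - 2x + 1 - e^{2x-2})`
is positive: this is the Taylor bound `e^t < 1 + t + t²/2` at `t = 2x - 2 < 0`. Strict concavity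
puts every proper convex combination strictly inside, except for two points on a common vertical,
where strict convexity of a segment does the job; the combination never reaches `x = 1`, where
the half-width vanishes.
-/

open Real Set Topology

theorem Real.exp_lt_quadratic_of_neg {x : ℝ} (hx : x < 0) : exp x < 1 + x + x ^ 2 / 2 := by
  set f : ℝ → ℝ := fun s => exp s - (1 + s + s ^ 2 / 2)
  have hf (s : ℝ) : HasDerivAt f (exp s - (1 + s)) s :=
    ((hasDerivAt_exp s).sub (((hasDerivAt_id s).const_add 1).add
      ((hasDerivAt_pow 2 s).div_const 2))).congr_deriv (by norm_num)
  have hmono : StrictMonoOn f (Iic 0) := by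
    refine strictMonoOn_of_deriv_pos (convex_Iic 0)
      (fun s _ => (hf s).continuousAt.continuousWithinAt) fun s hs => ?_
    rw [interior_Iic] at hs
    rw [(hf s).deriv]
    linarith [add_one_lt_exp hs.ne]
  have hlt := hmono (mem_Iic.2 hx.le) (mem_Iic.2 le_rfl) hx
  simp only [f, exp_zero] at hlt
  linarith

theorem StrictMono.lt_of_mem_interior_setOf_le {α β : Type*} [TopologicalSpace α] [LinearOrder α]
    [OrderTopology α] [DenselyOrdered α] [NoMinOrder α] [Preorder β] {f : α → β}
    (hf : StrictMono f) {c : β} {x : α} (hx : x ∈ interior {y | c ≤ f y}) : c < f x := by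
  have hleft : ∀ᶠ y in 𝓝[<] x, c ≤ f y := nhdsWithin_le_nhds (mem_interior_iff_mem_nhds.1 hx)
  obtain ⟨y, hyc, hyx⟩ := (hleft.and self_mem_nhdsWithin).exists
  exact hyc.trans_lt (hf hyx)

theorem strictConcaveOn_sqrt_of_hasDerivAt {D : Set ℝ} (hD : Convex ℝ D) {h h' h'' : ℝ → ℝ}
    (hcont : ContinuousOn h D) (hpos : ∀ x ∈ interior D, 0 < h x)
    (hh : ∀ x ∈ interior D, HasDerivAt h (h' x) x)
    (hh' : ∀ x ∈ interior D, HasDerivAt h' (h'' x) x)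
    (hkey : ∀ x ∈ interior D, 2 * h x * h'' x < h' x ^ 2) :
    StrictConcaveOn ℝ D fun x => √(h x) := by
  refine strictConcaveOn_of_deriv2_neg hD (continuous_sqrt.comp_continuousOn hcont) fun x hx => ?_
  have hderiv : deriv (fun x => √(h x)) =ᶠ[𝓝 x] fun y => h' y / (2 * √(h y)) := by
    filter_upwards [isOpen_interior.mem_nhds hx] with y hy
    exact ((hh y hy).sqrt (hpos y hy).ne').deriv
  have hs : 0 < √(h x) := sqrt_pos.2 (hpos x hx)
  have h2 := (hh' x hx).div (((hh x hx).sqrt (hpos x hx).ne').const_mul 2) (by positivity)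
  rw [Function.iterate_succ_apply, Function.iterate_one, hderiv.deriv_eq.trans h2.deriv]
  refine div_neg_of_neg_of_pos ?_ (by positivity)
  have hnum : h'' x * (2 * √(h x)) - h' x * (2 * (h' x / (2 * √(h x))))
      = (2 * h x * h'' x - h' x ^ 2) / √(h x) := by
    field_simp
    rw [sq_sqrt (hpos x hx).le]
  rw [hnum]
  exact div_neg_of_neg_of_pos (by linarith [hkey x hx]) hs

theorem abs_im_lt_of_strictConcaveOn {D : Set ℝ} {W : ℝ → ℝ} (hW : StrictConcaveOn ℝ D W)
    {z w : ℂ} (hz : z.re ∈ D) (hzW : |z.im| ≤ W z.re) (hw : w.re ∈ D) (hwW : |w.im| ≤ W w.re)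
    (hzw : z ≠ w) {a b : ℝ} (ha : 0 < a) (hb : 0 < b) (hab : a + b = 1) :
    |(a • z + b • w).im| < W (a • z + b • w).re := by
  simp only [Complex.add_re, Complex.add_im, Complex.smul_re, Complex.smul_im, smul_eq_mul]
  by_cases hre : z.re = w.re
  · have him : z.im ≠ w.im := fun him => hzw (Complex.ext hre him)
    rw [← hre] at hwW ⊢
    rw [← add_mul, hab, one_mul, abs_lt, ← mem_Ioo, ← interior_Icc]
    exact strictConvex_Icc _ _ (abs_le.1 hzW) (abs_le.1 hwW) him ha hb hab
  · calc |a * z.im + b * w.im| ≤ a * |z.im| + b * |w.im| := by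
          simpa only [abs_mul, abs_of_pos ha, abs_of_pos hb] using abs_add_le (a * z.im) (b * w.im)
      _ ≤ a * W z.re + b * W w.re := by gcongr
      _ < W (a * z.re + b * w.re) := hW.2 hz hw hre ha hb hab

namespace Szego

noncomputable def halfWidth (x : ℝ) : ℝ := √(exp (2 * x - 2) - x ^ 2)

-- `-x ≤ e^{x-1}` is the nontrivial half of `|x| ≤ e^{x-1}`: the other half is `x + 1 ≤ e^x`.
def reProj : Set ℝ := {x | x ≤ 1 ∧ 0 ≤ x + exp (x - 1)}

lemma exp_two_mul_sub_two (x : ℝ) : exp (2 * x - 2) = exp (x - 1) ^ 2 := by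
  rw [← exp_nat_mul]; ring_nf

lemma strictMono_add_exp_sub_one : StrictMono fun x : ℝ => x + exp (x - 1) :=
  fun _ _ h => add_lt_add h (exp_lt_exp.2 (sub_lt_sub_right h 1))

lemma mem_iff_norm_le_exp {z : ℂ} : z ∈ Szego ↔ z.re ≤ 1 ∧ ‖z‖ ≤ exp (z.re - 1) := by
  have hnorm : ‖z * Complex.exp (1 - z)‖ = ‖z‖ / exp (z.re - 1) := by
    rw [norm_mul, Complex.norm_exp, Complex.sub_re, Complex.one_re, div_eq_mul_inv, ← exp_neg,
      neg_sub]
  simp only [Szego, mem_inter_iff, mem_ofPred_eq, hnorm, div_le_one (exp_pos _)]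
  constructor
  · rintro ⟨h, h1⟩
    exact ⟨(Complex.re_le_norm z).trans h1, h⟩
  · rintro ⟨h1, h⟩
    exact ⟨h, h.trans (exp_le_one_iff.2 (by linarith))⟩

lemma norm_le_exp_iff {z : ℂ} :
    ‖z‖ ≤ exp (z.re - 1) ↔ 0 ≤ z.re + exp (z.re - 1) ∧ |z.im| ≤ halfWidth z.re := by
  have hnorm := Complex.sq_norm_sub_sq_re z
  rw [halfWidth, exp_two_mul_sub_two]
  constructor
  · intro h
    have hsq := pow_le_pow_left₀ (norm_nonneg z) h 2
    exact ⟨by linarith [neg_abs_le z.re, Complex.abs_re_le_norm z], abs_le_sqrt (by linarith)⟩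
  · rintro ⟨hx, hy⟩
    have hxe : z.re ^ 2 ≤ exp (z.re - 1) ^ 2 :=
      sq_le_sq' (by linarith) (by linarith [add_one_le_exp (z.re - 1)])
    rw [le_sqrt (abs_nonneg _) (by linarith), sq_abs] at hy
    exact (sq_le_sq₀ (norm_nonneg z) (exp_pos _).le).1 (by linarith)

lemma mem_iff {z : ℂ} : z ∈ Szego ↔ z.re ∈ reProj ∧ |z.im| ≤ halfWidth z.re := by
  rw [mem_iff_norm_le_exp, norm_le_exp_iff, reProj, mem_ofPred_eq, and_assoc]

lemma mem_interior_of_abs_im_lt {z : ℂ} (hre : z.re ≤ 1) (him : |z.im| < halfWidth z.re) :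
    z ∈ interior Szego := by
  have hre_ne : z.re ≠ 1 := by
    intro h
    rw [h, halfWidth] at him
    norm_num at him
    exact (abs_nonneg _).not_gt him
  rw [halfWidth, lt_sqrt (abs_nonneg _), sq_abs] at him
  have hnorm : ‖z‖ < exp (z.re - 1) := by
    rw [← sq_lt_sq₀ (norm_nonneg z) (exp_pos _).le, ← exp_two_mul_sub_two]
    linarith [Complex.sq_norm_sub_sq_re z]
  have hopen : IsOpen ({v : ℂ | v.re < 1} ∩ {v | ‖v‖ < exp (v.re - 1)}) :=
    (isOpen_lt (by fun_prop) (by fun_prop)).inter (isOpen_lt (by fun_prop) (by fun_prop))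
  exact interior_maximal (fun v hv => mem_iff_norm_le_exp.2 ⟨hv.1.le, hv.2.le⟩) hopen
    ⟨hre.lt_of_ne hre_ne, hnorm⟩

lemma convex_reProj : Convex ℝ reProj :=
  (convex_Iic 1).inter (strictMono_add_exp_sub_one.monotone.convex_ge 0)

lemma lt_one_and_sq_lt_of_mem_interior_reProj {x : ℝ} (hx : x ∈ interior reProj) :
    x < 1 ∧ x ^ 2 < exp (2 * x - 2) := by
  have hlt : x < 1 := by
    simpa using interior_mono (fun y (hy : y ∈ reProj) => mem_Iic.2 hy.1) hx
  have hpos : 0 < x + exp (x - 1) :=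
    strictMono_add_exp_sub_one.lt_of_mem_interior_setOf_le (interior_mono (fun y hy => hy.2) hx)
  rw [exp_two_mul_sub_two]
  exact ⟨hlt, sq_lt_sq' (by linarith) (by linarith [add_one_lt_exp (sub_ne_zero.2 hlt.ne)])⟩

lemma hasDerivAt_exp_two_mul_sub_two (x : ℝ) :
    HasDerivAt (fun x => exp (2 * x - 2)) (2 * exp (2 * x - 2)) x := by
  simpa [mul_comm] using (((hasDerivAt_id x).const_mul 2).sub_const 2).exp

lemma strictConcaveOn_halfWidth : StrictConcaveOn ℝ reProj halfWidth := by
  refine strictConcaveOn_sqrt_of_hasDerivAt (h' := fun x => 2 * exp (2 * x - 2) - 2 * x)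
    (h'' := fun x => 4 * exp (2 * x - 2) - 2) convex_reProj (by fun_prop)
    (fun x hx => sub_pos.2 (lt_one_and_sq_lt_of_mem_interior_reProj hx).2)
    (fun x _ => ?_) (fun x _ => ?_) fun x hx => ?_
  · exact ((hasDerivAt_exp_two_mul_sub_two x).sub (hasDerivAt_pow 2 x)).congr_deriv (by norm_num)
  · exact (((hasDerivAt_exp_two_mul_sub_two x).const_mul 2).sub
      ((hasDerivAt_id x).const_mul 2)).congr_deriv (by ring)
  · have htaylor := exp_lt_quadratic_of_neg (x := 2 * x - 2)
      (by linarith [(lt_one_and_sq_lt_of_mem_interior_reProj hx).1])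
    nlinarith [exp_pos (2 * x - 2)]

end Szego

/-- The Szegő region is strictly convex: it is convex, and every proper convex
combination of two distinct points of it lies in its interior. -/
theorem Szego_strictly_convex :
    Convex ℝ Szego ∧
    ∀ z ∈ Szego, ∀ w ∈ Szego, z ≠ w → ∀ t : ℝ, 0 < t → t < 1 →
      t • z + (1 - t) • w ∈ interior Szego := by
  have hstrict : StrictConvex ℝ Szego := by
    intro z hz w hw hzw a b ha hb hab
    rw [Szego.mem_iff] at hz hw
    have hre : (a • z + b • w).re ∈ Szego.reProj := by
      simpa using Szego.convex_reProj hz.1 hw.1 ha.le hb.le hab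
    exact Szego.mem_interior_of_abs_im_lt hre.1 <|
      abs_im_lt_of_strictConcaveOn Szego.strictConcaveOn_halfWidth hz.1 hz.2 hw.1 hw.2 hzw ha hb hab
  exact ⟨hstrict.convex, fun z hz w hw hzw t ht ht1 => hstrict hz hw hzw ht (by linarith) (by ring)⟩
end

section
/- The intersection C_{1/e} ∩ Σ₁ equals the two-point set {i/e, −i/e}. Moreover, for every ρ > 1/e, the intersection C_ρ ∩ Σ₁ is empty and the distance between the sets satisfies |C_ρ, Σ₁| ≥ (ρe − 1)/√(e² + 1). -/
/-- The half circular arc of radius `ρ` in the closed left half-plane. -/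
def C (ρ : ℝ) : Set ℂ := {z : ℂ | ‖z‖ = ρ ∧ z.re ≤ 0}

/-!
Membership in `Σ₁` amounts to `e‖z‖ ≤ e^{Re z}` and `‖z‖ ≤ 1`. In the closed left half-plane this
forces `‖z‖ ≤ 1/e`, with equality only on the imaginary axis; this gives `C_{1/e} ∩ Σ₁ = {±i/e}` and
`C_ρ ∩ Σ₁ = ∅` for `ρ > 1/e`. Since `e^x ≤ 1 + x + x²` on `[-1, 1]` and `e² > 5`, the region `Σ₁`
lies in the triangle `e|Im z| ≤ 1 + Re z`. Points of `Σ₁` in the left half-plane are at distance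
at least `ρ - 1/e` from `C_ρ`; for those in the right half-plane, Cauchy–Schwarz against the
normal `(1, e)` of the triangle's side gives the bound `(ρe - 1)/√(e² + 1)`.
-/

open Complex Real

lemma add_mul_le_sqrt_mul_sqrt (c x t : ℝ) : x + c * t ≤ √(c ^ 2 + 1) * √(x ^ 2 + t ^ 2) := by
  rw [← Real.sqrt_mul (by positivity)]
  exact Real.le_sqrt_of_sq_le (by nlinarith [sq_nonneg (c * x - t)])

lemma re_eq_zero_and_norm_eq_iff {z : ℂ} {r : ℝ} (hr : 0 ≤ r) :
    z.re = 0 ∧ ‖z‖ = r ↔ z = r * I ∨ z = -(r * I) := by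
  constructor
  · rintro ⟨hre, hnorm⟩
    rw [← abs_im_eq_norm.2 hre] at hnorm
    rcases abs_eq hr |>.1 hnorm with him | him
    · left; apply Complex.ext <;> simp [hre, him]
    · right; apply Complex.ext <;> simp [hre, him]
  · rintro (rfl | rfl) <;> simp [abs_of_nonneg hr]

lemma sq_add_sq_le_norm_sub_sq {a b : ℂ} (ha : a.re ≤ 0) (hb : 0 ≤ b.re) :
    b.re ^ 2 + (‖a‖ - |b.im|) ^ 2 ≤ ‖a - b‖ ^ 2 := by
  have ha' : ‖a‖ ^ 2 = a.re ^ 2 + a.im ^ 2 := by rw [Complex.sq_norm, normSq_apply]; ring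
  have hab : ‖a - b‖ ^ 2 = (a.re - b.re) ^ 2 + (a.im - b.im) ^ 2 := by
    rw [Complex.sq_norm, normSq_apply, sub_re, sub_im]; ring
  have him : a.im * b.im ≤ ‖a‖ * |b.im| := by
    calc a.im * b.im ≤ |a.im| * |b.im| := by rw [← abs_mul]; exact le_abs_self _
      _ ≤ ‖a‖ * |b.im| := by gcongr; exact abs_im_le_norm a
  nlinarith [sq_abs b.im, mul_nonneg (neg_nonneg.2 ha) hb]

lemma mem_Szego_iff {z : ℂ} : z ∈ Szego ↔ rexp 1 * ‖z‖ ≤ rexp z.re ∧ ‖z‖ ≤ 1 := by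
  show ‖z * cexp (1 - z)‖ ≤ 1 ∧ ‖z‖ ≤ 1 ↔ _
  rw [norm_mul, norm_exp, sub_re, one_re, Real.exp_sub, ← mul_div_assoc,
    div_le_one (Real.exp_pos _), mul_comm]

lemma exp_one_mul_abs_im_le_of_mem_Szego {b : ℂ} (hb : b ∈ Szego) :
    rexp 1 * |b.im| ≤ 1 + b.re := by
  obtain ⟨hexp, hnorm⟩ := mem_Szego_iff.1 hb
  have hre : |b.re| ≤ 1 := (abs_re_le_norm b).trans hnorm
  have he : 5 < rexp 1 ^ 2 := by nlinarith [Real.exp_one_gt_d9]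
  have hsq : ‖b‖ ^ 2 = b.re ^ 2 + b.im ^ 2 := by rw [Complex.sq_norm, normSq_apply]; ring
  have hquad : (rexp 1 * ‖b‖) ^ 2 ≤ (1 + b.re + b.re ^ 2) ^ 2 := by
    have hexp_le : rexp b.re ≤ 1 + b.re + b.re ^ 2 := by
      linarith [(abs_le.1 (abs_exp_sub_one_sub_id_le hre)).2]
    exact pow_le_pow_left₀ (by positivity) (hexp.trans hexp_le) 2
  have hx := abs_le.1 hre
  have hsq_le : (rexp 1 * |b.im|) ^ 2 ≤ (1 + b.re) ^ 2 := by
    rw [mul_pow, sq_abs]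
    -- with `x = Re b`, `hquad` exceeds `(1 + x)²` by `(2 + 2x + x²) x² ≤ e² x²`
    nlinarith [mul_le_mul_of_nonneg_left (show 2 + 2 * b.re + b.re ^ 2 ≤ rexp 1 ^ 2 by nlinarith)
      (sq_nonneg b.re)]
  exact pow_le_pow_iff_left₀ (by positivity) (by linarith) two_ne_zero |>.1 hsq_le

lemma mem_C_inv_exp_one_inter_Szego_iff {z : ℂ} :
    z ∈ C (1 / rexp 1) ∩ Szego ↔ z.re = 0 ∧ ‖z‖ = 1 / rexp 1 := by
  have he : 1 / rexp 1 ≤ 1 := by rw [div_le_one (by positivity)]; exact one_le_exp zero_le_one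
  constructor
  · rintro ⟨⟨hnorm, hre⟩, hz⟩
    have hexp := (mem_Szego_iff.1 hz).1
    rw [hnorm, mul_one_div_cancel (by positivity), one_le_exp_iff] at hexp
    exact ⟨le_antisymm hre hexp, hnorm⟩
  · rintro ⟨hre, hnorm⟩
    refine ⟨⟨hnorm, hre.le⟩, mem_Szego_iff.2 ⟨?_, hnorm ▸ he⟩⟩
    rw [hnorm, hre, mul_one_div_cancel (by positivity), Real.exp_zero]

lemma C_inter_Szego_eq_empty {ρ : ℝ} (hρ : 1 / rexp 1 < ρ) : C ρ ∩ Szego = ∅ := by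
  refine Set.eq_empty_of_forall_notMem fun z ⟨⟨hnorm, hre⟩, hz⟩ => ?_
  have hexp := (mem_Szego_iff.1 hz).1
  rw [hnorm] at hexp
  rw [div_lt_iff₀ (by positivity)] at hρ
  linarith [exp_le_one_iff.2 hre]

lemma mul_exp_one_sub_one_le_sqrt_mul_norm_sub {ρ : ℝ} {a b : ℂ} (ha : a ∈ C ρ) (hb : b ∈ Szego) :
    ρ * rexp 1 - 1 ≤ √(rexp 1 ^ 2 + 1) * ‖a - b‖ := by
  obtain ⟨hnorm, hre⟩ := ha
  have he : rexp 1 ≤ √(rexp 1 ^ 2 + 1) := Real.le_sqrt_of_sq_le (by linarith)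
  rcases lt_or_ge b.re 0 with hb_re | hb_re
  · have hb_norm : rexp 1 * ‖b‖ ≤ 1 :=
      (mem_Szego_iff.1 hb).1.trans (exp_le_one_iff.2 hb_re.le)
    calc ρ * rexp 1 - 1 ≤ rexp 1 * (ρ - ‖b‖) := by linarith
      _ ≤ rexp 1 * ‖a - b‖ := by gcongr; exact hnorm ▸ norm_sub_norm_le a b
      _ ≤ √(rexp 1 ^ 2 + 1) * ‖a - b‖ := by gcongr
  · have hline := exp_one_mul_abs_im_le_of_mem_Szego hb
    have hdist := sq_add_sq_le_norm_sub_sq hre hb_re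
    rw [hnorm] at hdist
    calc ρ * rexp 1 - 1 ≤ b.re + rexp 1 * (ρ - |b.im|) := by linarith
      _ ≤ √(rexp 1 ^ 2 + 1) * √(b.re ^ 2 + (ρ - |b.im|) ^ 2) := add_mul_le_sqrt_mul_sqrt _ _ _
      _ ≤ √(rexp 1 ^ 2 + 1) * ‖a - b‖ := by
        gcongr
        exact Real.sqrt_le_iff.2 ⟨norm_nonneg _, hdist⟩

/-- `C_{1/e} ∩ Σ₁ = {i/e, -i/e}`; and for every `ρ > 1/e`, `C_ρ ∩ Σ₁ = ∅` and
the distance between `C_ρ` and `Σ₁` is at least `(ρ e - 1)/√(e² + 1)`. -/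
theorem C_inter_Szego :
    C (1 / Real.exp 1) ∩ Szego =
      ({Complex.I / (Real.exp 1 : ℂ), -(Complex.I / (Real.exp 1 : ℂ))} : Set ℂ) ∧
    ∀ ρ : ℝ, 1 / Real.exp 1 < ρ →
      (C ρ ∩ Szego = ∅ ∧
        ∀ a ∈ C ρ, ∀ b ∈ Szego,
          (ρ * Real.exp 1 - 1) / Real.sqrt (Real.exp 1 ^ 2 + 1) ≤ ‖a - b‖) := by
  refine ⟨?_, fun ρ hρ => ⟨C_inter_Szego_eq_empty hρ, fun a ha b hb => ?_⟩⟩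
  · ext z
    have hI : ((1 / rexp 1 : ℝ) : ℂ) * I = I / (rexp 1 : ℂ) := by push_cast; ring
    rw [mem_C_inv_exp_one_inter_Szego_iff, re_eq_zero_and_norm_eq_iff (by positivity), hI]
    rfl
  · rw [div_le_iff₀ (by positivity), mul_comm _ (√_)]
    exact mul_exp_one_sub_one_le_sqrt_mul_norm_sub ha hb
end
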